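/- Let (q, p, H) solve the Painlevé III′ Hamiltonian system with parameters v1, v2 ∈ ℂ on an open set U ⊆ ℂ with 0 ∉ U. Define σ on Ũ := {s ∈ ℂ : s/4 ∈ U} by σ(s) := −(s/4)·H(s/4) − v1·(v1 − v2)/4 + s/4. Then σ satisfies the Jimbo–Miwa–Okamoto σ-form of Painlevé III′: (s·σ'')² − v1·v2·(σ')² + σ'·(4σ' − 1)·(σ − s·σ') − (v1 − v2)²/64 = 0 for all s ∈ Ũ. -/

import Mathlib

open Complex

/-- `(q, p, H)` solves the Painlevé III′ Hamiltonian system with parameters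
`v1, v2` on an open set `U ⊆ ℂ` with `0 ∉ U`. -/
def SolvesPIII' (v1 v2 : ℂ) (U : Set ℂ) (q p H : ℂ → ℂ) : Prop :=
  IsOpen U ∧ (0 : ℂ) ∉ U ∧
    DifferentiableOn ℂ q U ∧ DifferentiableOn ℂ p U ∧
    (∀ s ∈ U, s * H s =
      q s ^ 2 * p s ^ 2 - (q s ^ 2 + v1 * q s - s) * p s
        + (1 / 2) * (v1 + v2) * q s) ∧
    (∀ s ∈ U, s * deriv q s = 2 * q s ^ 2 * p s - q s ^ 2 - v1 * q s + s) ∧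
    (∀ s ∈ U, s * deriv p s =
      -2 * q s * p s ^ 2 + 2 * q s * p s + v1 * p s - (1 / 2) * (v1 + v2))

/-! Along a solution, the total derivative of `s·H(s)` is its explicit `s`-derivative `p`,
since the contributions through `q` and `p` cancel by Hamilton's equations. Hence
`σ'(s) = (1 - p(s/4))/4` and `σ''(s) = -p'(s/4)/16`, and the σ-form becomes a polynomial
identity in `q, p, t = s/4` once `t·p'(t)` is eliminated with the equation for `p`. -/

theorem HasDerivAt.comp_div_const {𝕜 : Type*} [NontriviallyNormedField 𝕜] {f : 𝕜 → 𝕜}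
    {f' c x : 𝕜} (hf : HasDerivAt f f' (x / c)) :
    HasDerivAt (fun y => f (y / c)) (f' / c) x := by
  simpa [Function.comp_def, div_eq_mul_inv] using hf.comp x ((hasDerivAt_id x).div_const c)

namespace SolvesPIII'

variable {v1 v2 : ℂ} {U : Set ℂ} {q p H : ℂ → ℂ} {t : ℂ}

theorem hasDerivAt_q (hsol : SolvesPIII' v1 v2 U q p H) (ht : t ∈ U) :
    HasDerivAt q (deriv q t) t :=
  (hsol.2.2.1.differentiableAt (hsol.1.mem_nhds ht)).hasDerivAt

theorem hasDerivAt_p (hsol : SolvesPIII' v1 v2 U q p H) (ht : t ∈ U) :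
    HasDerivAt p (deriv p t) t :=
  (hsol.2.2.2.1.differentiableAt (hsol.1.mem_nhds ht)).hasDerivAt

theorem hasDerivAt_mul_H (hsol : SolvesPIII' v1 v2 U q p H) (ht : t ∈ U) :
    HasDerivAt (fun s => s * H s) (p t) t := by
  have hQ := hsol.hasDerivAt_q ht
  have hP := hsol.hasDerivAt_p ht
  obtain ⟨hU, -, -, -, hH, hq', hp'⟩ := hsol
  have hK := ((((hQ.pow 2).mul (hP.pow 2)).sub
    ((((hQ.pow 2).add (hQ.const_mul v1)).sub (hasDerivAt_id t)).mul hP)).add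
    (hQ.const_mul ((1 / 2) * (v1 + v2))))
  have hev : (fun s => s * H s) =ᶠ[nhds t] fun s =>
      q s ^ 2 * p s ^ 2 - (q s ^ 2 + v1 * q s - id s) * p s + (1 / 2) * (v1 + v2) * q s := by
    filter_upwards [hU.mem_nhds ht] with s hs using hH s hs
  refine (hK.congr_of_eventuallyEq hev).congr_deriv ?_
  simp only [Pi.add_apply, Pi.sub_apply, Pi.pow_apply, id, Nat.cast_ofNat]
  linear_combination deriv q t * hp' t ht - deriv p t * hq' t ht

end SolvesPIII'

theorem sigma_form_identity (v1 v2 q p p' t : ℂ)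
    (hp' : t * p' = -2 * q * p ^ 2 + 2 * q * p + v1 * p - (1 / 2) * (v1 + v2)) :
    (4 * t * (-p' / 16)) ^ 2 - v1 * v2 * ((1 - p) / 4) ^ 2
      + (1 - p) / 4 * (4 * ((1 - p) / 4) - 1) *
        (-(q ^ 2 * p ^ 2 - (q ^ 2 + v1 * q - t) * p + (1 / 2) * (v1 + v2) * q)
          - v1 * (v1 - v2) / 4 + t - 4 * t * ((1 - p) / 4))
      - (v1 - v2) ^ 2 / 64 = 0 := by
  linear_combination
    (t * p' + (-2 * q * p ^ 2 + 2 * q * p + v1 * p - (1 / 2) * (v1 + v2))) / 16 * hp'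

/-- The σ-function `σ(s) = −(s/4)H(s/4) − v1(v1−v2)/4 + s/4` of a Painlevé III′
Hamiltonian system satisfies the Jimbo–Miwa–Okamoto σ-form of Painlevé III′. -/
theorem painleveIIIprime_sigma_form (v1 v2 : ℂ) (U : Set ℂ)
    (q p H σ : ℂ → ℂ)
    (hsol : SolvesPIII' v1 v2 U q p H)
    (hσ : σ = fun s => -((s / 4) * H (s / 4)) - v1 * (v1 - v2) / 4 + s / 4) :
    ∀ s : ℂ, s / 4 ∈ U →
      (s * deriv (deriv σ) s) ^ 2 - v1 * v2 * (deriv σ s) ^ 2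
        + deriv σ s * (4 * deriv σ s - 1) * (σ s - s * deriv σ s)
        - (v1 - v2) ^ 2 / 64 = 0 := by
  have hσ' : ∀ s, s / 4 ∈ U → deriv σ s = (1 - p (s / 4)) / 4 := fun s hs => by
    subst hσ
    refine ((((hsol.hasDerivAt_mul_H hs).comp_div_const (c := 4)).neg.sub_const _).add
      ((hasDerivAt_id s).div_const 4)).deriv.trans ?_
    ring
  have hσ'' : ∀ s, s / 4 ∈ U → deriv (deriv σ) s = -deriv p (s / 4) / 16 := fun s hs => by
    have hev : deriv σ =ᶠ[nhds s] fun x => (1 - p (x / 4)) / 4 := by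
      filter_upwards [(hsol.1.preimage (continuous_id.div_const 4)).mem_nhds hs] with x hx
      exact hσ' x hx
    rw [hev.deriv_eq, (((hsol.hasDerivAt_p hs).comp_div_const.const_sub 1).div_const 4).deriv]
    ring
  intro s hs
  obtain ⟨-, -, -, -, hH, -, hp'⟩ := hsol
  rw [hσ'' s hs, hσ' s hs, hσ]
  dsimp only
  rw [hH _ hs]
  linear_combination sigma_form_identity v1 v2 _ _ _ _ (hp' _ hs)
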